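/- Let β ≤ α be an infinite cardinal, let G be one of the Grassmannians G_β(V) or G^β(V), and let C and C' be connected components of the Grassmann graph Γ(G). If f : C → C' is a bijection such that both f and f⁻¹ map every apartment of the respective connected component onto an apartment of the other, then f is adjacency preserving in both directions: for all X, Y ∈ C, X and Y are adjacent if and only if f(X) and f(Y) are adjacent. -/

import Mathlib

/- Setting: `V` is a left vector space over a division ring `K` whose dimension
`α = Module.rank K V` is an infinite cardinal. -/

universe u v w

section Defs

variable (K : Type u) (V : Type v) [DivisionRing K] [AddCommGroup V] [Module K V]

/-- `B ⊆ V` is a basis of `V`, given as a set of vectors. -/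
def IsBasisSet (B : Set V) : Prop :=
  LinearIndependent K ((↑) : B → V) ∧ Submodule.span K B = ⊤

/-- The Grassmannian `G_β(V)`: all subspaces of dimension `β` and codimension `α`. -/
def Gsub (β : Cardinal.{v}) : Set (Submodule K V) :=
  {X | Module.rank K ↥X = β ∧ Module.rank K (V ⧸ X) = Module.rank K V}

/-- The Grassmannian `G^β(V)`: all subspaces of dimension `α` and codimension `β`. -/
def Gsup (β : Cardinal.{v}) : Set (Submodule K V) :=
  {X | Module.rank K ↥X = Module.rank K V ∧ Module.rank K (V ⧸ X) = β}

/-- The apartment of a Grassmannian `G` defined by a basis `B`: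
all elements of `G` spanned by subsets of `B`. -/
def apartmentOf (G : Set (Submodule K V)) (B : Set V) : Set (Submodule K V) :=
  {X | X ∈ G ∧ ∃ S ⊆ B, X = Submodule.span K S}

/-- `X` and `Y` are adjacent: `X ∩ Y` has codimension 1 in both `X` and `Y`,
i.e. `dim X/(X∩Y) = dim Y/(X∩Y) = 1`. -/
def AdjacentSub (X Y : Submodule K V) : Prop :=
  Module.rank K (↥X ⧸ Submodule.comap X.subtype (X ⊓ Y)) = 1 ∧
  Module.rank K (↥Y ⧸ Submodule.comap Y.subtype (X ⊓ Y)) = 1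

/-- `X` and `Y` lie in the same connected component of the Grassmann graph `Γ(G)`:
they are joined by a finite path of adjacent elements of `G`. -/
def SameComponent (G : Set (Submodule K V)) (X Y : Submodule K V) : Prop :=
  Relation.ReflTransGen (fun A B => A ∈ G ∧ B ∈ G ∧ AdjacentSub K V A B) X Y

/-- `C` is a connected component of the Grassmann graph `Γ(G)`. -/
def IsConnComponent (G : Set (Submodule K V)) (C : Set (Submodule K V)) : Prop :=
  ∃ X ∈ G, C = {Y | Y ∈ G ∧ SameComponent K V G X Y}

end Defs

/-!
Adjacency can be recognised inside one apartment from the apartment structure alone. Let `P` be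
the apartment of the component `C` given by a basis `B`, and call the nonempty traces on `P` of
the apartments of `C` *closed*. As dimension and codimension are infinite, the subspaces in `P`
realise every finite pattern of basis vectors inside and outside them. This forces the maximal
proper closed subsets of `P` to be exactly the sets `[b → b'] = {Z ∈ P | b ∈ Z → b' ∈ Z}` for
distinct `b, b' ∈ B` (the trace of the apartment of the basis `B \ {b} ∪ {b + b'}`), and the
polar pairs among them to be the pairs `([b → b'], [b' → b])`. Two elements `⟨s⟩`, `⟨t⟩` of `P`
(`s, t ⊆ B`) are adjacent iff `s \ t` and `t \ s` are singletons, that is, iff exactly one polar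
pair `(M, M')` has `⟨s⟩ ∉ M` and `⟨t⟩ ∉ M'`. A bijection that maps apartments onto apartments in
both directions maps closed subsets, hence polar pairs, onto each other and so preserves this
property; and any two subspaces lie in a common apartment.
-/

open Set

namespace GrassmannGraph

section PolarPairs

variable {α : Type*} (𝒞 : Set (Set α)) (P : Set α)

def IsMaxClosed (M : Set α) : Prop :=
  M ∈ 𝒞 ∧ M ⊂ P ∧ ∀ T ∈ 𝒞, M ⊆ T → T = M ∨ T = P

def IsPolarPair (M M' : Set α) : Prop :=
  IsMaxClosed 𝒞 P M ∧ IsMaxClosed 𝒞 P M' ∧ M ∪ M' = P ∧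
    ∀ N, IsMaxClosed 𝒞 P N → M ∩ M' ⊆ N → N = M ∨ N = M'

def PolarAdjacent (x y : α) : Prop :=
  ∃! p : Set α × Set α, IsPolarPair 𝒞 P p.1 p.2 ∧ x ∉ p.1 ∧ y ∉ p.2

variable {𝒞 P}

theorem IsPolarPair.symm {M M' : Set α} (h : IsPolarPair 𝒞 P M M') : IsPolarPair 𝒞 P M' M :=
  ⟨h.2.1, h.1, by rw [union_comm, h.2.2.1], fun N hN hMN =>
    (h.2.2.2 N hN (by rwa [inter_comm])).symm⟩

end PolarPairs

section Transport

variable {α α' : Type*}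

structure ClosedCorrespondence (𝒞 : Set (Set α)) (P : Set α) (𝒞' : Set (Set α')) (P' : Set α')
    (f : α → α') (g : α' → α) : Prop where
  mapsTo : MapsTo f P P'
  mapsTo_symm : MapsTo g P' P
  invOn : InvOn g f P P'
  image_mem : ∀ S ∈ 𝒞, f '' S ∈ 𝒞'
  image_mem_symm : ∀ S ∈ 𝒞', g '' S ∈ 𝒞
  subset_of_mem : ∀ S ∈ 𝒞, S ⊆ P
  subset_of_mem_symm : ∀ S ∈ 𝒞', S ⊆ P'

namespace ClosedCorrespondence

variable {𝒞 : Set (Set α)} {P : Set α} {𝒞' : Set (Set α')} {P' : Set α'} {f : α → α'}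
  {g : α' → α}

theorem symm (h : ClosedCorrespondence 𝒞 P 𝒞' P' f g) : ClosedCorrespondence 𝒞' P' 𝒞 P g f :=
  ⟨h.mapsTo_symm, h.mapsTo, h.invOn.symm, h.image_mem_symm, h.image_mem, h.subset_of_mem_symm,
    h.subset_of_mem⟩

theorem image_eq (h : ClosedCorrespondence 𝒞 P 𝒞' P' f g) : f '' P = P' :=
  (h.invOn.bijOn h.mapsTo h.mapsTo_symm).image_eq

theorem injOn (h : ClosedCorrespondence 𝒞 P 𝒞' P' f g) : InjOn f P :=
  h.invOn.1.injOn

theorem image_image (h : ClosedCorrespondence 𝒞 P 𝒞' P' f g) {S : Set α} (hS : S ⊆ P) :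
    g '' (f '' S) = S :=
  h.invOn.1.image_image' hS

theorem isMaxClosed_image (h : ClosedCorrespondence 𝒞 P 𝒞' P' f g) {M : Set α}
    (hM : IsMaxClosed 𝒞 P M) : IsMaxClosed 𝒞' P' (f '' M) := by
  obtain ⟨hM𝒞, hMP, hmax⟩ := hM
  refine ⟨h.image_mem M hM𝒞, ?_, fun T hT hMT => ?_⟩
  · rwa [← h.image_eq, h.injOn.image_ssubset_image_iff hMP.subset subset_rfl]
  · have hT' : T = f '' (g '' T) := (h.symm.image_image (h.subset_of_mem_symm T hT)).symm
    have hMgT : M ⊆ g '' T := by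
      rw [← h.image_image hMP.subset]
      exact image_mono hMT
    rcases hmax _ (h.image_mem_symm T hT) hMgT with hgT | hgT
    · exact Or.inl (by rw [hT', hgT])
    · exact Or.inr (by rw [hT', hgT, h.image_eq])

theorem isPolarPair_image (h : ClosedCorrespondence 𝒞 P 𝒞' P' f g) {M M' : Set α}
    (hMM' : IsPolarPair 𝒞 P M M') : IsPolarPair 𝒞' P' (f '' M) (f '' M') := by
  obtain ⟨hM, hM', hunion, huniq⟩ := hMM'
  refine ⟨h.isMaxClosed_image hM, h.isMaxClosed_image hM',
    by rw [← image_union, hunion, h.image_eq], fun N hN hMN => ?_⟩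
  have hMP : M ⊆ P := hM.2.1.subset
  have hM'P : M' ⊆ P := hM'.2.1.subset
  have hNfg : N = f '' (g '' N) := (h.symm.image_image (h.subset_of_mem_symm N hN.1)).symm
  have hMgN : M ∩ M' ⊆ g '' N := by
    rw [← h.image_image (inter_subset_left.trans hMP)]
    exact image_mono ((h.injOn.image_inter hMP hM'P).trans_subset hMN)
  rcases huniq _ (h.symm.isMaxClosed_image hN) hMgN with hgN | hgN
  · exact Or.inl (by rw [hNfg, hgN])
  · exact Or.inr (by rw [hNfg, hgN])

theorem polarAdjacent_image (h : ClosedCorrespondence 𝒞 P 𝒞' P' f g) {x y : α} (hx : x ∈ P)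
    (hy : y ∈ P) (hxy : PolarAdjacent 𝒞 P x y) : PolarAdjacent 𝒞' P' (f x) (f y) := by
  obtain ⟨⟨M, M'⟩, ⟨hMM', hxM, hyM'⟩, huniq⟩ := hxy
  have hMP : M ⊆ P := hMM'.1.2.1.subset
  have hM'P : M' ⊆ P := hMM'.2.1.2.1.subset
  refine ⟨(f '' M, f '' M'), ⟨h.isPolarPair_image hMM', (h.injOn.mem_image_iff hMP hx).not.2 hxM,
    (h.injOn.mem_image_iff hM'P hy).not.2 hyM'⟩, ?_⟩
  rintro ⟨N, N'⟩ ⟨hNN', hxN, hyN'⟩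
  have hNP : N ⊆ P' := hNN'.1.2.1.subset
  have hN'P : N' ⊆ P' := hNN'.2.1.2.1.subset
  have hpull := huniq (g '' N, g '' N') ⟨h.symm.isPolarPair_image hNN',
    fun hxN' => hxN (h.symm.image_image hNP ▸ mem_image_of_mem f hxN'),
    fun hyN'' => hyN' (h.symm.image_image hN'P ▸ mem_image_of_mem f hyN'')⟩
  simp only [Prod.mk.injEq] at hpull ⊢
  rw [← hpull.1, ← hpull.2, h.symm.image_image hNP, h.symm.image_image hN'P]
  exact ⟨rfl, rfl⟩

theorem polarAdjacent_image_iff (h : ClosedCorrespondence 𝒞 P 𝒞' P' f g) {x y : α}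
    (hx : x ∈ P) (hy : y ∈ P) : PolarAdjacent 𝒞' P' (f x) (f y) ↔ PolarAdjacent 𝒞 P x y := by
  refine ⟨fun hxy => ?_, h.polarAdjacent_image hx hy⟩
  rw [← h.invOn.1 hx, ← h.invOn.1 hy]
  exact h.symm.polarAdjacent_image (h.mapsTo hx) (h.mapsTo hy) hxy

end ClosedCorrespondence
end Transport

section Coordinates

variable {α ι : Type*} [Membership ι α]

def impFamily (P : Set α) (b b' : ι) : Set α :=
  {Z ∈ P | b ∈ Z → b' ∈ Z}

theorem notMem_impFamily_iff {P : Set α} {Z : α} (hZ : Z ∈ P) {b b' : ι} :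
    Z ∉ impFamily P b b' ↔ b ∈ Z ∧ b' ∉ Z := by
  simp [impFamily, hZ]

theorem impFamily_union_impFamily (P : Set α) (b b' : ι) :
    impFamily P b b' ∪ impFamily P b' b = P := by
  ext Z
  simp only [impFamily, mem_union, mem_sep_iff]
  tauto

/-- The properties of an apartment `P` with basis `B` and closed subsets `𝒞` that determine its
maximal closed subsets and polar pairs. -/
structure IsCoordinatizedBy (𝒞 : Set (Set α)) (P : Set α) (B : Set ι) : Prop where
  subset_of_mem : ∀ S ∈ 𝒞, S ⊆ P
  exists_mem : ∀ I O : Set ι, I.Finite → O.Finite → I ⊆ B → O ⊆ B → Disjoint I O →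
    ∃ Z ∈ P, (∀ i ∈ I, i ∈ Z) ∧ ∀ o ∈ O, o ∉ Z
  impFamily_mem : ∀ b ∈ B, ∀ b' ∈ B, b ≠ b' → impFamily P b b' ∈ 𝒞
  eq_of_forall_exists : ∀ S ∈ 𝒞, (∀ b ∈ B, ∀ b' ∈ B, b ≠ b' → ∃ Z ∈ S, b ∈ Z ∧ b' ∉ Z) → S = P

namespace IsCoordinatizedBy

variable {𝒞 : Set (Set α)} {P : Set α} {B : Set ι} {b b' c c' : ι}

theorem exists_mem_impFamily (h : IsCoordinatizedBy 𝒞 P B) (hb : b ∈ B) (hb' : b' ∈ B)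
    (hc : c ∈ B) (hc' : c' ∈ B) (hcc' : c ≠ c') (hne : (c, c') ≠ (b, b')) :
    ∃ Z ∈ impFamily P b b', c ∈ Z ∧ c' ∉ Z := by
  by_cases hcb : c = b
  · subst hcb
    have hc'b' : c' ≠ b' := fun e => hne (by rw [e])
    obtain ⟨Z, hZ, hI, hO⟩ := h.exists_mem {c, b'} {c'} (toFinite _) (toFinite _)
      (by simp [insert_subset_iff, *]) (by simpa) (by simp [hcc'.symm, hc'b'])
    exact ⟨Z, ⟨hZ, fun _ => hI b' (by simp)⟩, hI c (by simp), hO c' rfl⟩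
  · obtain ⟨Z, hZ, hI, hO⟩ := h.exists_mem {c} {b, c'} (toFinite _) (toFinite _)
      (by simpa) (by simp [insert_subset_iff, *]) (by simp [hcb, hcc'])
    exact ⟨Z, ⟨hZ, fun hbZ => absurd hbZ (hO b (by simp))⟩, hI c rfl, hO c' (by simp)⟩

theorem impFamily_subset_impFamily_iff (h : IsCoordinatizedBy 𝒞 P B) (hb : b ∈ B)
    (hb' : b' ∈ B) (hc : c ∈ B) (hc' : c' ∈ B) (hcc' : c ≠ c') :
    impFamily P b b' ⊆ impFamily P c c' ↔ c = b ∧ c' = b' := by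
  refine ⟨fun hsub => ?_, by rintro ⟨rfl, rfl⟩; rfl⟩
  by_contra hne
  obtain ⟨Z, hZ, hcZ, hc'Z⟩ :=
    h.exists_mem_impFamily hb hb' hc hc' hcc' (by simpa [Prod.ext_iff] using hne)
  exact hc'Z ((hsub hZ).2 hcZ)

theorem impFamily_ssubset (h : IsCoordinatizedBy 𝒞 P B) (hb : b ∈ B) (hb' : b' ∈ B)
    (hbb' : b ≠ b') : impFamily P b b' ⊂ P := by
  refine ssubset_of_subset_not_subset (fun _ hZ => hZ.1) fun hsub => ?_
  obtain ⟨Z, hZ, hI, hO⟩ := h.exists_mem {b} {b'} (toFinite _) (toFinite _) (by simpa)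
    (by simpa) (by simpa)
  exact hO b' rfl ((hsub hZ).2 (hI b rfl))

theorem isMaxClosed_impFamily (h : IsCoordinatizedBy 𝒞 P B) (hb : b ∈ B) (hb' : b' ∈ B)
    (hbb' : b ≠ b') : IsMaxClosed 𝒞 P (impFamily P b b') := by
  refine ⟨h.impFamily_mem b hb b' hb' hbb', h.impFamily_ssubset hb hb' hbb',
    fun T hT hsub => or_iff_not_imp_left.2 fun hne => h.eq_of_forall_exists T hT ?_⟩
  obtain ⟨Z₀, hZ₀T, hZ₀⟩ := exists_of_ssubset (hsub.ssubset_of_ne (Ne.symm hne))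
  intro c hc c' hc' hcc'
  by_cases hcb : (c, c') = (b, b')
  · simp only [Prod.mk.injEq] at hcb
    obtain ⟨rfl, rfl⟩ := hcb
    exact ⟨Z₀, hZ₀T, (notMem_impFamily_iff (h.subset_of_mem T hT hZ₀T)).1 hZ₀⟩
  · obtain ⟨Z, hZ, hZc⟩ := h.exists_mem_impFamily hb hb' hc hc' hcc' hcb
    exact ⟨Z, hsub hZ, hZc⟩

theorem isMaxClosed_iff (h : IsCoordinatizedBy 𝒞 P B) {M : Set α} :
    IsMaxClosed 𝒞 P M ↔ ∃ b ∈ B, ∃ b' ∈ B, b ≠ b' ∧ M = impFamily P b b' := by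
  refine ⟨fun hM => ?_, by
    rintro ⟨b, hb, b', hb', hbb', rfl⟩; exact h.isMaxClosed_impFamily hb hb' hbb'⟩
  have : ¬ ∀ b ∈ B, ∀ b' ∈ B, b ≠ b' → ∃ Z ∈ M, b ∈ Z ∧ b' ∉ Z :=
    fun hsep => hM.2.1.ne (h.eq_of_forall_exists M hM.1 hsep)
  push Not at this
  obtain ⟨b, hb, b', hb', hbb', hMb⟩ := this
  have hsub : M ⊆ impFamily P b b' := fun Z hZ => ⟨hM.2.1.subset hZ, hMb Z hZ⟩
  refine ⟨b, hb, b', hb', hbb', ?_⟩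
  rcases hM.2.2 _ (h.impFamily_mem b hb b' hb' hbb') hsub with e | e
  · exact e.symm
  · exact absurd e (h.impFamily_ssubset hb hb' hbb').ne

theorem exists_mem_inter_impFamily (h : IsCoordinatizedBy 𝒞 P B) (hb : b ∈ B) (hb' : b' ∈ B)
    (hc : c ∈ B) (hc' : c' ∈ B) (hcc' : c ≠ c') (hne : (c, c') ≠ (b, b'))
    (hne' : (c, c') ≠ (b', b)) : ∃ Z ∈ impFamily P b b' ∩ impFamily P b' b, c ∈ Z ∧ c' ∉ Z := by
  by_cases hcb : c = b ∨ c = b'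
  · have hc'b : c' ≠ b := by rintro rfl; rcases hcb with rfl | rfl <;> simp_all
    have hc'b' : c' ≠ b' := by rintro rfl; rcases hcb with rfl | rfl <;> simp_all
    obtain ⟨Z, hZ, hI, hO⟩ := h.exists_mem {b, b'} {c'} (toFinite _) (toFinite _)
      (by simp [insert_subset_iff, *]) (by simpa) (by simp [hc'b, hc'b'])
    refine ⟨Z, ⟨⟨hZ, fun _ => hI b' (by simp)⟩, ⟨hZ, fun _ => hI b (by simp)⟩⟩, ?_, hO c' rfl⟩
    rcases hcb with rfl | rfl <;> exact hI _ (by simp)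
  · push Not at hcb
    obtain ⟨Z, hZ, hI, hO⟩ := h.exists_mem {c} {b, b', c'} (toFinite _) (toFinite _)
      (by simpa) (by simp [insert_subset_iff, *]) (by simp [hcb.1, hcb.2, hcc'])
    exact ⟨Z, ⟨⟨hZ, fun hbZ => absurd hbZ (hO b (by simp))⟩,
      ⟨hZ, fun hbZ => absurd hbZ (hO b' (by simp))⟩⟩, hI c rfl, hO c' (by simp)⟩

theorem isPolarPair_impFamily (h : IsCoordinatizedBy 𝒞 P B) (hb : b ∈ B) (hb' : b' ∈ B)
    (hbb' : b ≠ b') : IsPolarPair 𝒞 P (impFamily P b b') (impFamily P b' b) := by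
  refine ⟨h.isMaxClosed_impFamily hb hb' hbb', h.isMaxClosed_impFamily hb' hb hbb'.symm,
    impFamily_union_impFamily P b b', fun N hN hsub => ?_⟩
  obtain ⟨c, hc, c', hc', hcc', rfl⟩ := h.isMaxClosed_iff.1 hN
  by_cases h₁ : (c, c') = (b, b')
  · simp only [Prod.mk.injEq] at h₁
    exact Or.inl (by rw [h₁.1, h₁.2])
  by_cases h₂ : (c, c') = (b', b)
  · simp only [Prod.mk.injEq] at h₂
    exact Or.inr (by rw [h₂.1, h₂.2])
  obtain ⟨Z, hZ, hcZ, hc'Z⟩ := h.exists_mem_inter_impFamily hb hb' hc hc' hcc' h₁ h₂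
  exact absurd ((hsub hZ).2 hcZ) hc'Z

theorem eq_of_isPolarPair_impFamily (h : IsCoordinatizedBy 𝒞 P B) (hb : b ∈ B) (hb' : b' ∈ B)
    (hc : c ∈ B) (hbb' : b ≠ b') (hcb : c ≠ b)
    (hpol : IsPolarPair 𝒞 P (impFamily P b b') (impFamily P c b)) : c = b' := by
  by_contra hcb'
  have hsub : impFamily P b b' ∩ impFamily P c b ⊆ impFamily P c b' :=
    fun Z ⟨hZ, hZ'⟩ => ⟨hZ.1, fun hcZ => hZ.2 (hZ'.2 hcZ)⟩
  rcases hpol.2.2.2 _ (h.isMaxClosed_impFamily hc hb' hcb') hsub with e | e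
  · exact hcb ((h.impFamily_subset_impFamily_iff hc hb' hb hb' hbb').1 e.le).1.symm
  · exact hbb' ((h.impFamily_subset_impFamily_iff hc hb' hc hb hcb).1 e.le).2

theorem isPolarPair_iff (h : IsCoordinatizedBy 𝒞 P B) {M M' : Set α} :
    IsPolarPair 𝒞 P M M' ↔
      ∃ b ∈ B, ∃ b' ∈ B, b ≠ b' ∧ M = impFamily P b b' ∧ M' = impFamily P b' b := by
  refine ⟨fun hpol => ?_, by
    rintro ⟨b, hb, b', hb', hbb', rfl, rfl⟩; exact h.isPolarPair_impFamily hb hb' hbb'⟩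
  obtain ⟨b, hb, b', hb', hbb', rfl⟩ := h.isMaxClosed_iff.1 hpol.1
  obtain ⟨c, hc, c', hc', hcc', rfl⟩ := h.isMaxClosed_iff.1 hpol.2.1
  have hcases : b = c' ∨ b' = c := by
    by_contra hne
    push Not at hne
    obtain ⟨Z, hZ, hI, hO⟩ := h.exists_mem {b, c} {b', c'} (toFinite _) (toFinite _)
      (by simp [insert_subset_iff, *]) (by simp [insert_subset_iff, *])
      (by simp [hbb'.symm, hne.2, hne.1.symm, hcc'.symm])
    rcases hpol.2.2.1.symm ▸ hZ with hZ | hZ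
    · exact hO b' (by simp) (hZ.2 (hI b (by simp)))
    · exact hO c' (by simp) (hZ.2 (hI c (by simp)))
  refine ⟨b, hb, b', hb', hbb', rfl, ?_⟩
  rcases hcases with rfl | rfl
  · rw [h.eq_of_isPolarPair_impFamily hb hb' hc hbb' hcc' hpol]
  · rw [← h.eq_of_isPolarPair_impFamily hc hc' hb hcc' hbb' hpol.symm]

theorem isPolarPair_and_notMem_iff (h : IsCoordinatizedBy 𝒞 P B) {X Y : α} (hX : X ∈ P)
    (hY : Y ∈ P) {M M' : Set α} :
    (IsPolarPair 𝒞 P M M' ∧ X ∉ M ∧ Y ∉ M') ↔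
      ∃ u ∈ {b ∈ B | b ∈ X ∧ b ∉ Y}, ∃ w ∈ {b ∈ B | b ∈ Y ∧ b ∉ X},
        M = impFamily P u w ∧ M' = impFamily P w u := by
  simp only [h.isPolarPair_iff]
  constructor
  · rintro ⟨⟨u, hu, w, hw, -, rfl, rfl⟩, hXM, hYM'⟩
    rw [notMem_impFamily_iff hX] at hXM
    rw [notMem_impFamily_iff hY] at hYM'
    exact ⟨u, ⟨hu, hXM.1, hYM'.2⟩, w, ⟨hw, hYM'.1, hXM.2⟩, rfl, rfl⟩
  · rintro ⟨u, ⟨hu, huX, huY⟩, w, ⟨hw, hwY, hwX⟩, rfl, rfl⟩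
    refine ⟨⟨u, hu, w, hw, fun e => hwX (e ▸ huX), rfl, rfl⟩, ?_, ?_⟩
    · exact (notMem_impFamily_iff hX).2 ⟨huX, hwX⟩
    · exact (notMem_impFamily_iff hY).2 ⟨hwY, huY⟩

theorem polarAdjacent_iff (h : IsCoordinatizedBy 𝒞 P B) {X Y : α} (hX : X ∈ P) (hY : Y ∈ P) :
    PolarAdjacent 𝒞 P X Y ↔
      (∃ u, {b ∈ B | b ∈ X ∧ b ∉ Y} = {u}) ∧ ∃ w, {b ∈ B | b ∈ Y ∧ b ∉ X} = {w} := by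
  have hsep := fun {M M'} => h.isPolarPair_and_notMem_iff hX hY (M := M) (M' := M')
  set S := {b ∈ B | b ∈ X ∧ b ∉ Y}
  set T := {b ∈ B | b ∈ Y ∧ b ∉ X}
  have hST : ∀ {u w}, u ∈ S → w ∈ T → u ≠ w := fun hu hw e => hw.2.2 (e ▸ hu.2.1)
  constructor
  · rintro ⟨⟨M, M'⟩, hMM', huniq⟩
    obtain ⟨u, hu, w, hw, rfl, rfl⟩ := hsep.1 hMM'
    have hpair : ∀ u' ∈ S, ∀ w' ∈ T, u' = u ∧ w' = w := fun u' hu' w' hw' => by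
      have e := huniq (impFamily P u' w', impFamily P w' u') (hsep.2 ⟨u', hu', w', hw', rfl, rfl⟩)
      simp only [Prod.mk.injEq] at e
      obtain ⟨rfl, rfl⟩ :=
        (h.impFamily_subset_impFamily_iff hu'.1 hw'.1 hu.1 hw.1 (hST hu hw)).1 e.1.le
      exact ⟨rfl, rfl⟩
    exact ⟨⟨u, eq_singleton_iff_unique_mem.2 ⟨hu, fun u' hu' => (hpair u' hu' w hw).1⟩⟩,
      ⟨w, eq_singleton_iff_unique_mem.2 ⟨hw, fun w' hw' => (hpair u hu w' hw').2⟩⟩⟩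
  · rintro ⟨⟨u, hSu⟩, ⟨w, hTw⟩⟩
    have hu : u ∈ S := hSu ▸ rfl
    have hw : w ∈ T := hTw ▸ rfl
    refine ⟨(impFamily P u w, impFamily P w u), hsep.2 ⟨u, hu, w, hw, rfl, rfl⟩, ?_⟩
    rintro ⟨M, M'⟩ hMM'
    obtain ⟨u', hu', w', hw', rfl, rfl⟩ := hsep.1 hMM'
    rw [hSu, mem_singleton_iff] at hu'
    rw [hTw, mem_singleton_iff] at hw'
    rw [hu', hw']

end IsCoordinatizedBy
end Coordinates

section Span

open Submodule

variable {K : Type u} {V : Type v} [DivisionRing K] [AddCommGroup V] [Module K V] {B s t : Set V}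

noncomputable def _root_.IsBasisSet.toBasis (hB : IsBasisSet K V B) : Module.Basis B K V :=
  Module.Basis.mk hB.1 (by rw [Subtype.range_coe, hB.2])

theorem _root_.IsBasisSet.linearIndepOn (hB : IsBasisSet K V B) : LinearIndepOn K id B :=
  hB.1

theorem _root_.IsBasisSet.mem_span_iff (hB : IsBasisSet K V B) (hs : s ⊆ B) {x : V} :
    x ∈ span K s ↔ ∀ i ∈ (hB.toBasis.repr x).support, (i : V) ∈ s := by
  have hs' : s = hB.toBasis '' (Subtype.val ⁻¹' s) := by
    rw [_root_.IsBasisSet.toBasis, Module.Basis.coe_mk, Subtype.image_preimage_coe,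
      inter_eq_right.2 hs]
  conv_lhs => rw [hs', Module.Basis.mem_span_image]
  rfl

theorem _root_.IsBasisSet.span_iInter (hB : IsBasisSet K V B) {ι : Sort*} [Nonempty ι]
    {U : ι → Set V} (hU : ∀ i, U i ⊆ B) : span K (⋂ i, U i) = ⨅ i, span K (U i) := by
  ext x
  simp only [mem_iInf, hB.mem_span_iff (hU _),
    hB.mem_span_iff ((iInter_subset _ (Classical.arbitrary ι)).trans (hU _)), mem_iInter]
  exact ⟨fun h j i hi => h i hi j, fun h i hi j => h j i hi⟩

theorem mem_span_iff_of_subset (hB : LinearIndepOn K id B) (hs : s ⊆ B) {b : V} (hb : b ∈ B) :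
    b ∈ span K s ↔ b ∈ s :=
  ⟨fun h => (hB.mono hs).mem_span_iff_id.1 h (hB.mono (insert_subset hb hs)),
    fun h => subset_span h⟩

theorem inter_span_of_subset (hB : LinearIndepOn K id B) (hs : s ⊆ B) :
    B ∩ (span K s : Set V) = s :=
  Subset.antisymm (fun _ ⟨hb, h⟩ => (mem_span_iff_of_subset hB hs hb).1 h)
    (subset_inter hs subset_span)

theorem disjoint_span_of_subset (hB : LinearIndepOn K id B) (hs : s ⊆ B) (ht : t ⊆ B)
    (hst : Disjoint s t) : Disjoint (span K s) (span K t) :=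
  ((linearIndepOn_id_union_iff hst).1 (hB.mono (union_subset hs ht))).2.2

theorem _root_.IsBasisSet.rank_quotient_span (hB : IsBasisSet K V B) (hs : s ⊆ B) :
    Module.rank K (V ⧸ span K s) = Cardinal.mk ↥(B \ s) := by
  have hcompl : IsCompl (span K s) (span K (B \ s)) :=
    ⟨disjoint_span_of_subset hB.linearIndepOn hs sdiff_subset disjoint_sdiff_right,
      by rw [codisjoint_iff, ← span_union, union_sdiff_cancel hs, hB.2]⟩
  rw [(quotientEquivOfIsCompl _ _ hcompl).rank_eq,
    rank_span_set (hB.linearIndepOn.mono sdiff_subset)]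

theorem rank_quotient_comap_inf {X Y W : Submodule K V} (hWX : W ≤ X) (hX : X ≤ Y ⊔ W)
    (hWY : Disjoint W Y) : Module.rank K (X ⧸ (X ⊓ Y).comap X.subtype) = Module.rank K W := by
  have hker : LinearMap.ker (Y.mkQ ∘ₗ X.subtype) = (X ⊓ Y).comap X.subtype := by
    rw [LinearMap.ker_comp, ker_mkQ, comap_inf, comap_subtype_self, top_inf_eq]
  have hinj : Function.Injective (Y.mkQ ∘ₗ W.subtype) := by
    rw [← LinearMap.ker_eq_bot, LinearMap.ker_comp, ker_mkQ, ← disjoint_iff_comap_eq_bot]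
    exact hWY
  have hrange : LinearMap.range (Y.mkQ ∘ₗ X.subtype) = LinearMap.range (Y.mkQ ∘ₗ W.subtype) := by
    simp only [LinearMap.range_comp, range_subtype]
    refine le_antisymm ?_ (map_mono hWX)
    calc X.map Y.mkQ ≤ (Y ⊔ W).map Y.mkQ := map_mono hX
      _ = W.map Y.mkQ := by rw [Submodule.map_sup, mkQ_map_self, bot_sup_eq]
  rw [← hker, (LinearMap.quotKerEquivRange _).rank_eq, hrange, rank_range_of_injective _ hinj]

theorem rank_quotient_span_comap_inf (hB : LinearIndepOn K id B) (hs : s ⊆ B) (ht : t ⊆ B) :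
    Module.rank K (span K s ⧸ (span K s ⊓ span K t).comap (span K s).subtype) =
      Cardinal.mk ↥(s \ t) := by
  rw [rank_quotient_comap_inf (span_mono sdiff_subset) _
    (disjoint_span_of_subset hB (sdiff_subset.trans hs) ht disjoint_sdiff_left),
    rank_span_set (hB.mono (sdiff_subset.trans hs))]
  rw [← span_union]
  exact span_mono (fun x hx => (em (x ∈ t)).imp id fun hxt => ⟨hx, hxt⟩)

theorem adjacentSub_span_iff (hB : LinearIndepOn K id B) (hs : s ⊆ B) (ht : t ⊆ B) :
    AdjacentSub K V (span K s) (span K t) ↔ (∃ u, s \ t = {u}) ∧ ∃ w, t \ s = {w} := by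
  rw [AdjacentSub, rank_quotient_span_comap_inf hB hs ht, inf_comm,
    rank_quotient_span_comap_inf hB ht hs, Cardinal.mk_set_eq_one_iff, Cardinal.mk_set_eq_one_iff]

end Span

section SpansOfSubsets

open Submodule

variable {K : Type u} {V : Type v} [DivisionRing K] [AddCommGroup V] [Module K V] {B s : Set V}

variable (K) in
def spansOfSubsets (B : Set V) : Set (Submodule K V) :=
  {X | ∃ s ⊆ B, X = span K s}

theorem span_inter_of_mem_spansOfSubsets (hB : LinearIndepOn K id B) {X : Submodule K V}
    (hX : X ∈ spansOfSubsets K B) : span K (B ∩ (X : Set V)) = X := by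
  obtain ⟨s, hs, rfl⟩ := hX
  rw [inter_span_of_subset hB hs]

theorem iSup_mem_spansOfSubsets {ι : Sort*} {Z : ι → Submodule K V}
    (hZ : ∀ i, Z i ∈ spansOfSubsets K B) : ⨆ i, Z i ∈ spansOfSubsets K B := by
  choose s hs hZs using hZ
  exact ⟨⋃ i, s i, iUnion_subset hs, by rw [span_iUnion]; exact iSup_congr hZs⟩

theorem iInf_mem_spansOfSubsets (hB : IsBasisSet K V B) {ι : Sort*} [Nonempty ι]
    {Z : ι → Submodule K V} (hZ : ∀ i, Z i ∈ spansOfSubsets K B) :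
    ⨅ i, Z i ∈ spansOfSubsets K B := by
  choose s hs hZs using hZ
  exact ⟨⋂ i, s i, (iInter_subset _ (Classical.arbitrary ι)).trans (hs _),
    by rw [hB.span_iInter hs]; exact iInf_congr hZs⟩

theorem span_eq_iInf_iSup (hB : IsBasisSet K V B) (hs : s ⊆ B) [Nonempty ↥(B \ s)]
    (Z : ↥(B \ s) → ↥s → Submodule K V) (hZ : ∀ i j, Z i j ∈ spansOfSubsets K B)
    (hin : ∀ i j, (j : V) ∈ Z i j) (hout : ∀ i j, (i : V) ∉ Z i j) :
    span K s = ⨅ i, ⨆ j, Z i j := by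
  have hs_eq : s = ⋂ i, ⋃ j, B ∩ (Z i j : Set V) := by
    refine Subset.antisymm (fun x hx => mem_iInter.2 fun i => mem_iUnion.2
      ⟨⟨x, hx⟩, hs hx, hin i ⟨x, hx⟩⟩) fun x hx => ?_
    obtain ⟨-, hxB, -⟩ := mem_iUnion.1 (mem_iInter.1 hx (Classical.arbitrary _))
    by_contra hxs
    obtain ⟨j, -, hxZ⟩ := mem_iUnion.1 (mem_iInter.1 hx ⟨x, hxB, hxs⟩)
    exact hout _ j hxZ
  calc span K s = span K (⋂ i, ⋃ j, B ∩ (Z i j : Set V)) := congrArg _ hs_eq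
    _ = ⨅ i, ⨆ j, Z i j := by
      rw [hB.span_iInter fun i => iUnion_subset fun j => inter_subset_left]
      simp_rw [span_iUnion, span_inter_of_mem_spansOfSubsets hB.linearIndepOn (hZ _ _)]

theorem span_insert_add_sdiff_singleton {b b' : V} (hb : b ∈ s) (hb' : b' ∈ s) (hbb' : b ≠ b') :
    span K (insert (b + b') (s \ {b})) = span K s := by
  refine le_antisymm (span_le.2 (insert_subset (add_mem (subset_span hb) (subset_span hb'))
    (sdiff_subset.trans subset_span))) (span_le.2 fun x hx => ?_)
  by_cases hxb : x = b
  · subst hxb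
    simpa using sub_mem (subset_span (mem_insert _ _) : x + b' ∈ span K (insert (x + b') (s \ {x})))
      (subset_span (mem_insert_of_mem _ ⟨hb', hbb'.symm⟩))
  · exact subset_span (mem_insert_of_mem _ ⟨hx, hxb⟩)

theorem _root_.IsBasisSet.insert_add_sdiff_singleton (hB : IsBasisSet K V B) {b b' : V} (hb : b ∈ B)
    (hb' : b' ∈ B) (hbb' : b ≠ b') : IsBasisSet K V (insert (b + b') (B \ {b})) := by
  have hb'B : b' ∈ B \ {b} := ⟨hb', hbb'.symm⟩
  have hnotin : b + b' ∉ span K (B \ {b}) := fun h => by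
    have hbspan : b ∈ span K (B \ {b}) := by simpa using sub_mem h (subset_span hb'B)
    exact ((mem_span_iff_of_subset hB.linearIndepOn sdiff_subset hb).1 hbspan).2 rfl
  exact ⟨(hB.linearIndepOn.mono sdiff_subset).id_insert hnotin,
    by rw [span_insert_add_sdiff_singleton hb hb' hbb', hB.2]⟩

theorem mem_spansOfSubsets_insert_add_iff (hB : LinearIndepOn K id B) {b b' : V} (hb : b ∈ B)
    (hb' : b' ∈ B) (hbb' : b ≠ b') {Z : Submodule K V} (hZ : Z ∈ spansOfSubsets K B) :
    Z ∈ spansOfSubsets K (insert (b + b') (B \ {b})) ↔ (b ∈ Z → b' ∈ Z) := by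
  constructor
  · rintro ⟨u, hu, rfl⟩ hbZ
    by_cases hsum : b + b' ∈ u
    · simpa using sub_mem (subset_span hsum) hbZ
    · have huB : u ⊆ B \ {b} := fun x hx => (mem_insert_iff.1 (hu hx)).resolve_left
        fun e => hsum (e ▸ hx)
      exact absurd ((mem_span_iff_of_subset hB (huB.trans sdiff_subset) hb).1 hbZ)
        fun h => (huB h).2 rfl
  · obtain ⟨s, hs, rfl⟩ := hZ
    intro himp
    by_cases hbs : b ∈ s
    · have hb's : b' ∈ s := (mem_span_iff_of_subset hB hs hb').1 (himp (subset_span hbs))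
      exact ⟨insert (b + b') (s \ {b}), insert_subset_insert (sdiff_subset_sdiff_left hs),
        (span_insert_add_sdiff_singleton hbs hb's hbb').symm⟩
    · exact ⟨s, fun x hx => mem_insert_of_mem _ ⟨hs hx, fun e => hbs (e ▸ hx)⟩, rfl⟩

theorem exists_isBasisSet_mem_spansOfSubsets (X Y : Submodule K V) :
    ∃ B, IsBasisSet K V B ∧ X ∈ spansOfSubsets K B ∧ Y ∈ spansOfSubsets K B := by
  obtain ⟨s₀, hs₀XY, hs₀span, hs₀⟩ := exists_linearIndependent K ((X ⊓ Y : Submodule K V) : Set V)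
  rw [span_eq] at hs₀span
  obtain ⟨sX, hsXX, hs₀sX, hXsX, hsX⟩ :=
    exists_linearIndepOn_id_extension hs₀ (hs₀XY.trans inter_subset_left)
  obtain ⟨sY, hsYY, hs₀sY, hYsY, hsY⟩ :=
    exists_linearIndepOn_id_extension hs₀ (hs₀XY.trans inter_subset_right)
  have hspanX : span K sX = X := le_antisymm (span_le.2 hsXX) hXsX
  have hspanY : span K sY = Y := le_antisymm (span_le.2 hsYY) hYsY
  have hdisj : Disjoint (span K sX) (span K (sY \ s₀)) := by
    refine disjoint_def.2 fun v hvX hvY => ?_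
    have hv : v ∈ span K s₀ := by
      rw [hs₀span]
      exact ⟨hspanX ▸ hvX, hspanY ▸ span_mono sdiff_subset hvY⟩
    exact disjoint_def.1
      (disjoint_span_of_subset hsY hs₀sY sdiff_subset disjoint_sdiff_right) v hv hvY
  have hli : LinearIndepOn K id (sX ∪ sY) := by
    rw [← union_sdiff_self]
    exact hsX.id_union (hsY.mono sdiff_subset)
      (hdisj.mono_right (span_mono (sdiff_subset_sdiff_right hs₀sX)))
  obtain ⟨B, -, hB, hBspan, hBli⟩ := exists_linearIndepOn_id_extension hli (subset_univ _)
  exact ⟨B, ⟨hBli, eq_top_iff.2 fun x _ => hBspan (mem_univ x)⟩,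
    ⟨sX, subset_union_left.trans hB, hspanX.symm⟩, ⟨sY, subset_union_right.trans hB, hspanY.symm⟩⟩

end SpansOfSubsets

section Grassmannian

open Submodule Cardinal

variable {K : Type u} {V : Type v} [DivisionRing K] [AddCommGroup V] [Module K V]
  {a c : Cardinal.{v}} {B s : Set V} {G C : Set (Submodule K V)}

variable (K V) in
def grassmannian (a c : Cardinal.{v}) : Set (Submodule K V) :=
  {X | Module.rank K X = a ∧ Module.rank K (V ⧸ X) = c}

theorem span_mem_grassmannian_iff (hB : IsBasisSet K V B) (hs : s ⊆ B) :
    span K s ∈ grassmannian K V a c ↔ #s = a ∧ #↥(B \ s) = c := by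
  rw [grassmannian, mem_ofPred_eq, rank_span_set (hB.linearIndepOn.mono hs),
    hB.rank_quotient_span hs]

theorem infinite_of_span_mem_grassmannian (ha : ℵ₀ ≤ a) (hc : ℵ₀ ≤ c) (hB : IsBasisSet K V B)
    (hs : s ⊆ B) (h : span K s ∈ grassmannian K V a c) : s.Infinite ∧ (B \ s).Infinite := by
  rw [span_mem_grassmannian_iff hB hs] at h
  exact ⟨infinite_coe_iff.1 (infinite_iff.2 (h.1 ▸ ha)),
    infinite_coe_iff.1 (infinite_iff.2 (h.2 ▸ hc))⟩

theorem _root_.Cardinal.mk_insert_sdiff_singleton {α : Type*} {s : Set α} {u w : α} (hu : u ∈ s)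
    (hw : w ∉ s) : #↥(insert w (s \ {u})) = #s := by
  rw [mk_insert fun h => hw h.1, ← mk_insert fun h : u ∈ s \ {u} => h.2 rfl,
    insert_sdiff_singleton, insert_eq_of_mem hu]

theorem span_insert_sdiff_singleton_mem_grassmannian (hB : IsBasisSet K V B) (hs : s ⊆ B)
    {u w : V} (hu : u ∈ s) (hw : w ∈ B \ s) (h : span K s ∈ grassmannian K V a c) :
    span K (insert w (s \ {u})) ∈ grassmannian K V a c := by
  have hcompl : B \ insert w (s \ {u}) = insert u ((B \ s) \ {w}) := by
    ext x
    grind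
  rw [span_mem_grassmannian_iff hB hs] at h
  rw [span_mem_grassmannian_iff hB (insert_subset hw.1 (sdiff_subset.trans hs)),
    mk_insert_sdiff_singleton hu hw.2, hcompl, mk_insert_sdiff_singleton hw fun h => h.2 hu]
  exact h

theorem adjacentSub_span_insert_sdiff_singleton (hB : LinearIndepOn K id B) (hs : s ⊆ B)
    {u w : V} (hu : u ∈ s) (hw : w ∈ B \ s) :
    AdjacentSub K V (span K s) (span K (insert w (s \ {u}))) := by
  rw [adjacentSub_span_iff hB hs (insert_subset hw.1 (sdiff_subset.trans hs))]
  refine ⟨⟨u, ?_⟩, ⟨w, ?_⟩⟩ <;> ext x <;> grind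

theorem _root_.IsConnComponent.subset (hC : IsConnComponent K V G C) : C ⊆ G := by
  obtain ⟨X, -, rfl⟩ := hC
  exact fun _ hY => hY.1

theorem _root_.IsConnComponent.mem_of_adjacentSub (hC : IsConnComponent K V G C)
    {Z Z' : Submodule K V} (hZ : Z ∈ C) (hZ' : Z' ∈ G) (hadj : AdjacentSub K V Z Z') : Z' ∈ C := by
  obtain ⟨X, -, rfl⟩ := hC
  exact ⟨hZ', hZ.2.tail ⟨hZ.1, hZ', hadj⟩⟩

theorem span_insert_sdiff_singleton_mem (hB : IsBasisSet K V B)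
    (hC : IsConnComponent K V (grassmannian K V a c) C) (hs : s ⊆ B) {u w : V} (hu : u ∈ s)
    (hw : w ∈ B \ s) (h : span K s ∈ C) : span K (insert w (s \ {u})) ∈ C :=
  hC.mem_of_adjacentSub h
    (span_insert_sdiff_singleton_mem_grassmannian hB hs hu hw (hC.subset h))
    (adjacentSub_span_insert_sdiff_singleton hB.linearIndepOn hs hu hw)

theorem span_mem_of_encard_sdiff_eq (hB : IsBasisSet K V B)
    (hC : IsConnComponent K V (grassmannian K V a c) C) (n : ℕ) :
    ∀ {s s' : Set V}, s ⊆ B → s' ⊆ B → (s \ s').encard = n → (s' \ s).encard = n →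
      span K s ∈ C → span K s' ∈ C := by
  induction n with
  | zero =>
    intro s s' _ _ h₁ h₂ h
    rw [Nat.cast_zero, encard_eq_zero, sdiff_eq_empty] at h₁ h₂
    rwa [← subset_antisymm h₁ h₂]
  | succ n ih =>
    intro s s' hs hs' h₁ h₂ h
    obtain ⟨u, hu⟩ := nonempty_of_encard_ne_zero (s := s \ s') (by simp [h₁])
    obtain ⟨w, hw⟩ := nonempty_of_encard_ne_zero (s := s' \ s) (by simp [h₂])
    have e₁ : insert w (s \ {u}) \ s' = (s \ s') \ {u} := by
      ext x; grind
    have e₂ : s' \ insert w (s \ {u}) = (s' \ s) \ {w} := by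
      ext x; grind
    refine ih (insert_subset (hs' hw.1) (sdiff_subset.trans hs)) hs' ?_ ?_
      (span_insert_sdiff_singleton_mem hB hC hs hu.1 ⟨hs' hw.1, hw.2⟩ h)
    · have := encard_sdiff_singleton_add_one hu
      rw [h₁, ← e₁] at this
      simpa using this
    · have := encard_sdiff_singleton_add_one hw
      rw [h₂, ← e₂] at this
      simpa using this

end Grassmannian

theorem exists_subset_finite_modification {ι : Type*} {B s₀ I O : Set ι} (hs₀B : s₀ ⊆ B)
    (hs₀ : s₀.Infinite) (hBs₀ : (B \ s₀).Infinite) (hI : I.Finite) (hO : O.Finite) (hIB : I ⊆ B)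
    (hIO : Disjoint I O) :
    ∃ s ⊆ B, I ⊆ s ∧ Disjoint O s ∧ ∃ n : ℕ, (s₀ \ s).encard = n ∧ (s \ s₀).encard = n := by
  -- Remove `O ∩ s₀` and add `I \ s₀`; the fresh elements `E ⊆ s₀` and `F ⊆ B \ s₀` balance
  -- the numbers of removed and added elements.
  obtain ⟨E, hE, hEcard⟩ := exists_subset_encard_eq (s := s₀ \ (I ∪ O)) (k := (I \ s₀).encard)
    (by rw [(hs₀.sdiff (hI.union hO)).encard_eq]; exact le_top)
  obtain ⟨F, hF, hFcard⟩ := exists_subset_encard_eq (s := (B \ s₀) \ (I ∪ O))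
    (k := (O ∩ s₀).encard) (by rw [(hBs₀.sdiff (hI.union hO)).encard_eq]; exact le_top)
  have hIO' := disjoint_left.1 hIO
  have e₁ : s₀ \ (s₀ \ (O ∪ E) ∪ (I ∪ F)) = (O ∩ s₀) ∪ E := by
    ext x; have := @hE x; have := @hF x; have := @hIO' x; grind
  have e₂ : (s₀ \ (O ∪ E) ∪ (I ∪ F)) \ s₀ = (I \ s₀) ∪ F := by
    ext x; have := @hE x; have := @hF x; grind
  refine ⟨s₀ \ (O ∪ E) ∪ (I ∪ F), union_subset (sdiff_subset.trans hs₀B)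
      (union_subset hIB fun x hx => (hF hx).1.1), subset_union_left.trans subset_union_right,
      ?_, (O ∩ s₀).ncard + (I \ s₀).ncard, ?_, ?_⟩
  · rw [disjoint_union_right, disjoint_union_right]
    exact ⟨disjoint_sdiff_right.mono_right (sdiff_subset_sdiff_right subset_union_left),
      hIO.symm, disjoint_left.2 fun x hxO hxF => (hF hxF).2 (Or.inr hxO)⟩
  · rw [e₁, encard_union_eq (disjoint_left.2 fun x hx hxE => (hE hxE).2 (Or.inr hx.1)), hEcard]
    push_cast
    rw [(hO.inter_of_left _).cast_ncard_eq, hI.sdiff.cast_ncard_eq]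
  · rw [e₂, encard_union_eq (disjoint_left.2 fun x hx hxF => (hF hxF).2 (Or.inl hx.1)), hFcard]
    push_cast
    rw [(hO.inter_of_left _).cast_ncard_eq, hI.sdiff.cast_ncard_eq, add_comm]

section Apartments

open Submodule Cardinal

variable {K : Type u} {V : Type v} [DivisionRing K] [AddCommGroup V] [Module K V]
  {a c : Cardinal.{v}} {B : Set V} {G C C' P : Set (Submodule K V)}

theorem exists_mem_apartment_of_finite (ha : ℵ₀ ≤ a) (hc : ℵ₀ ≤ c)
    (hB : IsBasisSet K V B) (hC : IsConnComponent K V (grassmannian K V a c) C)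
    (hP : (apartmentOf K V (grassmannian K V a c) B ∩ C).Nonempty) {I O : Set V} (hI : I.Finite)
    (hO : O.Finite) (hIB : I ⊆ B) (hOB : O ⊆ B) (hIO : Disjoint I O) :
    ∃ Z ∈ apartmentOf K V (grassmannian K V a c) B ∩ C, (∀ i ∈ I, i ∈ Z) ∧ ∀ o ∈ O, o ∉ Z := by
  obtain ⟨_, ⟨hZ₀G, s₀, hs₀B, rfl⟩, hZ₀C⟩ := hP
  obtain ⟨hs₀, hBs₀⟩ := infinite_of_span_mem_grassmannian ha hc hB hs₀B hZ₀G
  obtain ⟨s, hsB, hIs, hOs, n, h₁, h₂⟩ :=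
    exists_subset_finite_modification hs₀B hs₀ hBs₀ hI hO hIB hIO
  have hsC := span_mem_of_encard_sdiff_eq hB hC n hs₀B hsB h₁ h₂ hZ₀C
  exact ⟨span K s, ⟨⟨hC.subset hsC, s, hsB, rfl⟩, hsC⟩, fun i hi => subset_span (hIs hi),
    fun o ho hoZ => disjoint_left.1 hOs ho
      ((mem_span_iff_of_subset hB.linearIndepOn hsB (hOB ho)).1 hoZ)⟩

def closedSubsets (G C P : Set (Submodule K V)) : Set (Set (Submodule K V)) :=
  {S | S.Nonempty ∧ ∃ B, IsBasisSet K V B ∧ S = P ∩ (apartmentOf K V G B ∩ C)}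

theorem impFamily_mem_closedSubsets (ha : ℵ₀ ≤ a) (hc : ℵ₀ ≤ c) (hB : IsBasisSet K V B)
    (hC : IsConnComponent K V (grassmannian K V a c) C)
    (hP : (apartmentOf K V (grassmannian K V a c) B ∩ C).Nonempty) {b b' : V} (hb : b ∈ B)
    (hb' : b' ∈ B) (hbb' : b ≠ b') :
    impFamily (apartmentOf K V (grassmannian K V a c) B ∩ C) b b' ∈
      closedSubsets (grassmannian K V a c) C (apartmentOf K V (grassmannian K V a c) B ∩ C) := by
  obtain ⟨Z, hZ, -, hbZ⟩ := exists_mem_apartment_of_finite ha hc hB hC hP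
    finite_empty (finite_singleton b) (empty_subset B) (singleton_subset_iff.2 hb)
    (empty_disjoint _)
  refine ⟨⟨Z, hZ, fun h => absurd h (hbZ b rfl)⟩, _, hB.insert_add_sdiff_singleton hb hb' hbb', ?_⟩
  ext Z
  have key := fun hZ : Z ∈ apartmentOf K V (grassmannian K V a c) B ∩ C =>
    mem_spansOfSubsets_insert_add_iff hB.linearIndepOn hb hb' hbb' (Z := Z) hZ.1.2
  exact ⟨fun ⟨hZ, himp⟩ => ⟨hZ, ⟨hZ.1.1, (key hZ).2 himp⟩, hZ.2⟩,
    fun ⟨hZ, hZ', _⟩ => ⟨hZ, (key hZ).1 hZ'.2⟩⟩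

theorem eq_of_mem_closedSubsets_of_separating (hc : c ≠ 0) (hB : IsBasisSet K V B) {S}
    (hS : S ∈ closedSubsets (grassmannian K V a c) C
      (apartmentOf K V (grassmannian K V a c) B ∩ C))
    (hsep : ∀ b ∈ B, ∀ b' ∈ B, b ≠ b' → ∃ Z ∈ S, b ∈ Z ∧ b' ∉ Z) :
    S = apartmentOf K V (grassmannian K V a c) B ∩ C := by
  obtain ⟨-, B₂, hB₂, rfl⟩ := hS
  refine Subset.antisymm inter_subset_left fun Z₀ hZ₀ => ⟨hZ₀, ⟨hZ₀.1.1, ?_⟩, hZ₀.2⟩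
  obtain ⟨⟨hZ₀G, s, hsB, rfl⟩, -⟩ := hZ₀
  have : Nonempty ↥(B \ s) := by
    rw [← mk_ne_zero_iff, ((span_mem_grassmannian_iff hB hsB).1 hZ₀G).2]
    exact hc
  choose Z hZ hin hout using fun (i : ↥(B \ s)) (j : ↥s) =>
    hsep j (hsB j.2) i i.2.1 fun e => i.2.2 (e ▸ j.2)
  -- `span s` is a lattice expression in members of `S`, all spanned by subsets of `B₂`.
  rw [span_eq_iInf_iSup hB hsB Z (fun i j => (hZ i j).1.1.2) hin hout]
  exact iInf_mem_spansOfSubsets hB₂ fun i => iSup_mem_spansOfSubsets fun j => (hZ i j).2.1.2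

theorem isCoordinatizedBy_closedSubsets (ha : ℵ₀ ≤ a) (hc : ℵ₀ ≤ c) (hB : IsBasisSet K V B)
    (hC : IsConnComponent K V (grassmannian K V a c) C)
    (hP : (apartmentOf K V (grassmannian K V a c) B ∩ C).Nonempty) :
    IsCoordinatizedBy
      (closedSubsets (grassmannian K V a c) C (apartmentOf K V (grassmannian K V a c) B ∩ C))
      (apartmentOf K V (grassmannian K V a c) B ∩ C) B where
  subset_of_mem := by
    rintro S ⟨-, -, -, rfl⟩
    exact inter_subset_left
  exists_mem _ _ hI hO hIB hOB hIO :=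
    exists_mem_apartment_of_finite ha hc hB hC hP hI hO hIB hOB hIO
  impFamily_mem _ hb _ hb' hbb' := impFamily_mem_closedSubsets ha hc hB hC hP hb hb' hbb'
  eq_of_forall_exists _ hS hsep :=
    eq_of_mem_closedSubsets_of_separating (aleph0_pos.trans_le hc).ne' hB hS hsep

theorem sep_mem_span_notMem_span (hB : LinearIndepOn K id B) {s t : Set V} (hs : s ⊆ B)
    (ht : t ⊆ B) : {b ∈ B | b ∈ span K s ∧ b ∉ span K t} = s \ t := by
  ext b
  refine ⟨fun ⟨hb, hbs, hbt⟩ => ⟨(mem_span_iff_of_subset hB hs hb).1 hbs,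
    fun h => hbt (subset_span h)⟩, fun ⟨hbs, hbt⟩ => ⟨hs hbs, subset_span hbs, fun h => ?_⟩⟩
  exact hbt ((mem_span_iff_of_subset hB ht (hs hbs)).1 h)

theorem adjacentSub_iff_polarAdjacent (ha : ℵ₀ ≤ a) (hc : ℵ₀ ≤ c) (hB : IsBasisSet K V B)
    (hC : IsConnComponent K V (grassmannian K V a c) C) {X Y : Submodule K V}
    (hX : X ∈ apartmentOf K V (grassmannian K V a c) B ∩ C)
    (hY : Y ∈ apartmentOf K V (grassmannian K V a c) B ∩ C) :
    AdjacentSub K V X Y ↔ PolarAdjacent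
      (closedSubsets (grassmannian K V a c) C (apartmentOf K V (grassmannian K V a c) B ∩ C))
      (apartmentOf K V (grassmannian K V a c) B ∩ C) X Y := by
  rw [(isCoordinatizedBy_closedSubsets ha hc hB hC ⟨X, hX⟩).polarAdjacent_iff hX hY]
  obtain ⟨⟨-, s, hs, rfl⟩, -⟩ := hX
  obtain ⟨⟨-, t, ht, rfl⟩, -⟩ := hY
  rw [adjacentSub_span_iff hB.linearIndepOn hs ht, sep_mem_span_notMem_span hB.linearIndepOn hs ht,
    sep_mem_span_notMem_span hB.linearIndepOn ht hs]

def MapsApartments (G C C' : Set (Submodule K V)) (f : Submodule K V → Submodule K V) : Prop :=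
  ∀ B, IsBasisSet K V B → (apartmentOf K V G B ∩ C).Nonempty →
    ∃ B', IsBasisSet K V B' ∧ (apartmentOf K V G B' ∩ C').Nonempty ∧
      f '' (apartmentOf K V G B ∩ C) = apartmentOf K V G B' ∩ C'

theorem image_mem_closedSubsets {f : Submodule K V → Submodule K V}
    (hf : MapsApartments G C C' f) (hinj : InjOn f C) (hP : P ⊆ C) {S : Set (Submodule K V)}
    (hS : S ∈ closedSubsets G C P) : f '' S ∈ closedSubsets G C' (f '' P) := by
  obtain ⟨hne, B, hB, rfl⟩ := hS
  obtain ⟨B', hB', -, himage⟩ := hf B hB (hne.mono inter_subset_right)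
  exact ⟨hne.image f, B', hB', by rw [hinj.image_inter hP inter_subset_right, himage]⟩

theorem closedCorrespondence_closedSubsets {f g : Submodule K V → Submodule K V}
    (hf : MapsApartments G C C' f) (hg : MapsApartments G C' C g) (hbij : BijOn f C C')
    (hinv : InvOn g f C C') (hP : P ⊆ C) :
    ClosedCorrespondence (closedSubsets G C P) P (closedSubsets G C' (f '' P)) (f '' P) f g where
  mapsTo := mapsTo_image f P
  mapsTo_symm := by
    rintro _ ⟨x, hx, rfl⟩
    rwa [hinv.1 (hP hx)]
  invOn := hinv.mono hP ((image_mono hP).trans hbij.image_eq.subset)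
  image_mem _ hS := image_mem_closedSubsets hf hbij.injOn hP hS
  image_mem_symm _ hS := by
    simpa only [hinv.1.image_image' hP] using image_mem_closedSubsets hg hinv.2.injOn
      ((image_mono hP).trans hbij.image_eq.subset) hS
  subset_of_mem := by
    rintro S ⟨-, -, -, rfl⟩
    exact inter_subset_left
  subset_of_mem_symm := by
    rintro S ⟨-, -, -, rfl⟩
    exact inter_subset_left

end Apartments

end GrassmannGraph

open GrassmannGraph Cardinal

variable {K : Type u} {V : Type v} [DivisionRing K] [AddCommGroup V] [Module K V]

theorem stmt19_general (hα : Cardinal.aleph0 ≤ Module.rank K V)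
    (β : Cardinal.{v}) (hβinf : Cardinal.aleph0 ≤ β)
    (G : Set (Submodule K V)) (hG : G = Gsub K V β ∨ G = Gsup K V β)
    (C C' : Set (Submodule K V))
    (hC : IsConnComponent K V G C) (hC' : IsConnComponent K V G C')
    (f g : Submodule K V → Submodule K V)
    (hbij : Set.BijOn f C C') (hinv : Set.InvOn g f C C')
    (hf : ∀ B : Set V, IsBasisSet K V B → (apartmentOf K V G B ∩ C).Nonempty →
      ∃ B' : Set V, IsBasisSet K V B' ∧ (apartmentOf K V G B' ∩ C').Nonempty ∧
        f '' (apartmentOf K V G B ∩ C) = apartmentOf K V G B' ∩ C')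
    (hg : ∀ B' : Set V, IsBasisSet K V B' → (apartmentOf K V G B' ∩ C').Nonempty →
      ∃ B : Set V, IsBasisSet K V B ∧ (apartmentOf K V G B ∩ C).Nonempty ∧
        g '' (apartmentOf K V G B' ∩ C') = apartmentOf K V G B ∩ C) :
    ∀ X ∈ C, ∀ Y ∈ C, (AdjacentSub K V X Y ↔ AdjacentSub K V (f X) (f Y)) := by
  intro X hX Y hY
  obtain ⟨a, c, ha, hc, rfl⟩ : ∃ a c, ℵ₀ ≤ a ∧ ℵ₀ ≤ c ∧ G = grassmannian K V a c := by
    rcases hG with rfl | rfl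
    exacts [⟨β, _, hβinf, hα, rfl⟩, ⟨_, β, hα, hβinf, rfl⟩]
  obtain ⟨B, hB, hXB, hYB⟩ := exists_isBasisSet_mem_spansOfSubsets X Y
  set P := apartmentOf K V (grassmannian K V a c) B ∩ C
  have hXP : X ∈ P := ⟨⟨hC.subset hX, hXB⟩, hX⟩
  have hYP : Y ∈ P := ⟨⟨hC.subset hY, hYB⟩, hY⟩
  obtain ⟨B', hB', -, hPP'⟩ := hf B hB ⟨X, hXP⟩
  have hcorr := closedCorrespondence_closedSubsets hf hg hbij hinv (P := P) Set.inter_subset_right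
  rw [hPP'] at hcorr
  rw [adjacentSub_iff_polarAdjacent ha hc hB hC hXP hYP,
    adjacentSub_iff_polarAdjacent ha hc hB' hC' (hcorr.mapsTo hXP) (hcorr.mapsTo hYP),
    hcorr.polarAdjacent_image_iff hXP hYP]

/-- For infinite `β` and connected components `C`, `C'` of the Grassmann graph, every
bijection `f : C → C'` such that `f` and `f⁻¹` send apartments to apartments is
adjacency preserving in both directions. -/
theorem stmt19 (hα : Cardinal.aleph0 ≤ Module.rank K V)
    (β : Cardinal.{v}) (hβinf : Cardinal.aleph0 ≤ β) (hβ : β ≤ Module.rank K V)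
    (G : Set (Submodule K V)) (hG : G = Gsub K V β ∨ G = Gsup K V β)
    (C C' : Set (Submodule K V))
    (hC : IsConnComponent K V G C) (hC' : IsConnComponent K V G C')
    (f g : Submodule K V → Submodule K V)
    (hbij : Set.BijOn f C C') (hinv : Set.InvOn g f C C')
    (hf : ∀ B : Set V, IsBasisSet K V B → (apartmentOf K V G B ∩ C).Nonempty →
      ∃ B' : Set V, IsBasisSet K V B' ∧ (apartmentOf K V G B' ∩ C').Nonempty ∧
        f '' (apartmentOf K V G B ∩ C) = apartmentOf K V G B' ∩ C')
    (hg : ∀ B' : Set V, IsBasisSet K V B' → (apartmentOf K V G B' ∩ C').Nonempty →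
      ∃ B : Set V, IsBasisSet K V B ∧ (apartmentOf K V G B ∩ C).Nonempty ∧
        g '' (apartmentOf K V G B' ∩ C') = apartmentOf K V G B ∩ C) :
    ∀ X ∈ C, ∀ Y ∈ C, (AdjacentSub K V X Y ↔ AdjacentSub K V (f X) (f Y)) :=
  stmt19_general hα β hβinf G hG C C' hC hC' f g hbij hinv hf hg
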